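/- arXiv:2503.15018 — 2 statements merged into one kernel-verified Lean document; each statement's English description precedes it below -/
import Mathlib

section
/- Let S(a) = H_a(w_+(a)) + H_a(w_-(a)) for a > 0, where H_a and w_±(a) carry their dependence on a explicitly. Then S(a) → 0 as a → 0+, S is differentiable on (0,∞) with S'(a) = -a, and consequently S(a) < 0 for every a > 0; equivalently, H_a(w_+(a)) < -H_a(w_-(a)) for all a > 0. -/
open Real Filter

/-- `H a w = (w² - 1)/2 + (2+a)(w+1) + log(-w)` -/
noncomputable def H (a w : ℝ) : ℝ := (w ^ 2 - 1) / 2 + (2 + a) * (w + 1) + Real.log (-w)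

/-- `w₊ = -1 - a/2 + √(a + a²/4)` -/
noncomputable def wp (a : ℝ) : ℝ := -1 - a / 2 + Real.sqrt (a + a ^ 2 / 4)

/-- `w₋ = -1 - a/2 - √(a + a²/4)` -/
noncomputable def wm (a : ℝ) : ℝ := -1 - a / 2 - Real.sqrt (a + a ^ 2 / 4)

/-- `S a = H_a(w₊(a)) + H_a(w₋(a))`. -/
noncomputable def S (a : ℝ) : ℝ := H a (wp a) + H a (wm a)

/-!
`w₊(a)` and `w₋(a)` are the roots of `w² + (2 + a) w + 1`, so their sum is `-(2 + a)` and their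
product is `1`. The logarithms in `S a` therefore cancel, and Vieta's formulas reduce the polynomial
part to the closed form `S a = -a² / 2`.
-/

lemma wp_add_wm (a : ℝ) : wp a + wm a = -(2 + a) := by
  unfold wp wm; ring

lemma wp_mul_wm {a : ℝ} (ha : 0 ≤ a) : wp a * wm a = 1 := by
  have hs : Real.sqrt (a + a ^ 2 / 4) ^ 2 = a + a ^ 2 / 4 := Real.sq_sqrt (by positivity)
  unfold wp wm
  linear_combination -hs

lemma wm_neg {a : ℝ} (ha : 0 ≤ a) : wm a < 0 := by
  have := Real.sqrt_nonneg (a + a ^ 2 / 4)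
  unfold wm; linarith

lemma wp_neg {a : ℝ} (ha : 0 ≤ a) : wp a < 0 := by
  have hprod := wp_mul_wm ha
  by_contra! h
  nlinarith [wm_neg ha]

lemma S_eq {a : ℝ} (ha : 0 ≤ a) : S a = -a ^ 2 / 2 := by
  have hlog : Real.log (-wp a) + Real.log (-wm a) = 0 := by
    rw [← Real.log_mul (by linarith [wp_neg ha]) (by linarith [wm_neg ha]), neg_mul_neg,
      wp_mul_wm ha, Real.log_one]
  have hsq : wp a ^ 2 + wm a ^ 2 = (2 + a) ^ 2 - 2 := by
    linear_combination (wp a + wm a - (2 + a)) * wp_add_wm a - 2 * wp_mul_wm ha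
  unfold S H
  linear_combination hlog + hsq / 2 + (2 + a) * wp_add_wm a

theorem stmt_5 :
    Tendsto S (nhdsWithin 0 (Set.Ioi 0)) (nhds 0) ∧
    (∀ a : ℝ, 0 < a → HasDerivAt S (-a) a) ∧
    (∀ a : ℝ, 0 < a → S a < 0) ∧
    (∀ a : ℝ, 0 < a → H a (wp a) < -H a (wm a)) := by
  have hneg : ∀ a : ℝ, 0 < a → S a < 0 := fun a ha => by
    rw [S_eq ha.le]; nlinarith
  refine ⟨?_, fun a ha => ?_, hneg, fun a ha => ?_⟩
  · have hlim : Tendsto (fun a : ℝ => -a ^ 2 / 2) (nhdsWithin 0 (Set.Ioi 0)) (nhds 0) := by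
      have := ((continuous_pow 2).neg.div_const 2).tendsto (0 : ℝ)
      simpa using this.mono_left nhdsWithin_le_nhds
    refine hlim.congr' ?_
    filter_upwards [self_mem_nhdsWithin] with a ha
    exact (S_eq (le_of_lt ha)).symm
  · have hderiv : HasDerivAt (fun x : ℝ => -x ^ 2 / 2) (-a) a := by
      exact ((hasDerivAt_pow 2 a).neg.div_const 2).congr_deriv (by norm_num; ring)
    refine hderiv.congr_of_eventuallyEq ?_
    filter_upwards [Ioi_mem_nhds ha] with x hx
    exact S_eq (le_of_lt hx)
  · have := hneg a ha
    unfold S at this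
    linarith
end

section
/- Fix a > 0 and define G : (-∞,-1) → ℝ by G(z) = (z² - φ(z)²)/2 + (1+a)(z - φ(z)). Then G is differentiable on (-∞,-1) and its derivative factorizes as G'(z) = ((z - φ(z)) / (z(φ(z)+1))) · ((z+1)(φ(z)+1) + a). In particular, G'(z) = 0 if and only if (z+1)(φ(z)+1) + a = 0. -/
/-!
Near `z < -1`, `φ` is the composite of `x ↦ x eˣ` with the local inverse of the same map around
`φ z > -1`, because `w ↦ w e^w` is injective on `[-1, ∞)`. The inverse function theorem then gives
`φ'(z) = (1 + z) e^z / ((1 + φ z) e^{φ z})`, and `φ z e^{φ z} = z e^z` turns this into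
`φ'(z) z (1 + φ z) = (1 + z) φ z`. Substituting into `G' = z - φ φ' + (1 + a)(1 - φ')` and
factoring gives the formula; the first factor is nonzero since `z < φ z` and `z (φ z + 1) < 0`.
-/

open Real Filter Topology Set

lemma hasStrictDerivAt_mul_exp (x : ℝ) :
    HasStrictDerivAt (fun w : ℝ => w * exp w) ((1 + x) * exp x) x :=
  ((hasStrictDerivAt_id x).fun_mul (hasStrictDerivAt_exp x)).congr_deriv (by simp only [id_eq]; ring)

lemma strictMonoOn_mul_exp : StrictMonoOn (fun w : ℝ => w * exp w) (Ici (-1)) := by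
  refine strictMonoOn_of_deriv_pos (convex_Ici _)
    (continuous_id.mul continuous_exp).continuousOn fun w hw => ?_
  rw [interior_Ici] at hw
  rw [(hasStrictDerivAt_mul_exp w).hasDerivAt.deriv]
  exact mul_pos (by linarith [mem_Ioi.mp hw]) (exp_pos w)

theorem HasStrictDerivAt.hasDerivAt_of_apply_eq {f φ ψ : ℝ → ℝ} {f' ψ' z : ℝ} {s : Set ℝ}
    (hf : HasStrictDerivAt f f' (φ z)) (hf' : f' ≠ 0) (hinj : InjOn f s) (hs : s ∈ 𝓝 (φ z))
    (hφs : ∀ᶠ x in 𝓝 z, φ x ∈ s) (hψ : HasDerivAt ψ ψ' z) (hfφ : ∀ᶠ x in 𝓝 z, f (φ x) = ψ x) :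
    HasDerivAt φ (ψ' / f') z := by
  set g := hf.localInverse f f' (φ z) hf'
  have hψz : ψ z = f (φ z) := hfφ.self_of_nhds.symm
  have hg : HasStrictDerivAt g f'⁻¹ (ψ z) := hψz ▸ hf.to_localInverse hf'
  have hgψ : g (ψ z) = φ z := hψz ▸ (hf.hasStrictFDerivAt_equiv hf').localInverse_apply_image
  have hright : ∀ᶠ y in 𝓝 (ψ z), f (g y) = y :=
    hψz ▸ (hf.hasStrictFDerivAt_equiv hf').eventually_right_inverse
  have hgs : ∀ᶠ y in 𝓝 (ψ z), g y ∈ s :=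
    hg.hasDerivAt.continuousAt.preimage_mem_nhds (hgψ ▸ hs)
  have hφ_eq : ∀ᶠ x in 𝓝 z, g (ψ x) = φ x := by
    filter_upwards [hψ.continuousAt.eventually (hright.and hgs), hφs, hfφ]
      with x ⟨hfg, hgx⟩ hφx hfx
    exact hinj hgx hφx (hfg.trans hfx.symm)
  rw [div_eq_inv_mul]
  exact (hg.hasDerivAt.comp z hψ).congr_of_eventuallyEq (hφ_eq.mono fun _ h => h.symm)

lemma hasDerivAt_of_mul_exp_eq (φ : ℝ → ℝ)
    (hφ : ∀ z : ℝ, z < -1 → φ z ∈ Ioo (-1 : ℝ) 0 ∧ φ z * exp (φ z) = z * exp z)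
    {z : ℝ} (hz : z < -1) :
    HasDerivAt φ ((1 + z) * φ z / (z * (1 + φ z))) z := by
  obtain ⟨⟨hφ1, hφ0⟩, hφz⟩ := hφ z hz
  have hnear : ∀ᶠ x in 𝓝 z, x < -1 := Iio_mem_nhds hz
  have hderiv := (hasStrictDerivAt_mul_exp (φ z)).hasDerivAt_of_apply_eq
    (mul_ne_zero (by linarith) (exp_ne_zero _)) strictMonoOn_mul_exp.injOn
    (Ici_mem_nhds hφ1) (hnear.mono fun x hx => (hφ x hx).1.1.le)
    (hasStrictDerivAt_mul_exp z).hasDerivAt (hnear.mono fun x hx => (hφ x hx).2)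
  convert hderiv using 1
  have hexp : exp (φ z) = z * exp z / φ z := by
    rw [eq_div_iff hφ0.ne, mul_comm, hφz]
  rw [hexp]
  have : z ≠ 0 := by linarith
  have : 1 + φ z ≠ 0 := by linarith
  field_simp [hφ0.ne, exp_ne_zero z]

theorem stmt_10_general (φ : ℝ → ℝ)
    (hφ : ∀ z : ℝ, z < -1 → φ z ∈ Set.Ioo (-1 : ℝ) 0 ∧ φ z * Real.exp (φ z) = z * Real.exp z)
    (a : ℝ)
    (G : ℝ → ℝ) (hG : ∀ z : ℝ, z < -1 → G z = (z ^ 2 - φ z ^ 2) / 2 + (1 + a) * (z - φ z)) :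
    (∀ z : ℝ, z < -1 →
      HasDerivAt G ((z - φ z) / (z * (φ z + 1)) * ((z + 1) * (φ z + 1) + a)) z) ∧
    (∀ z : ℝ, z < -1 → (deriv G z = 0 ↔ (z + 1) * (φ z + 1) + a = 0)) := by
  have hG' : ∀ z : ℝ, z < -1 →
      HasDerivAt G ((z - φ z) / (z * (φ z + 1)) * ((z + 1) * (φ z + 1) + a)) z := by
    intro z hz
    obtain ⟨⟨hφ1, hφ0⟩, -⟩ := hφ z hz
    have hφ' := hasDerivAt_of_mul_exp_eq φ hφ hz
    have hformula := ((((hasDerivAt_pow 2 z).sub (hφ'.fun_pow 2)).div_const 2).add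
      (((hasDerivAt_id z).sub hφ').const_mul (1 + a))).congr_of_eventuallyEq
      (eventually_of_mem (Iio_mem_nhds hz) hG)
    refine hformula.congr_deriv ?_
    have : z ≠ 0 := by linarith
    have : 1 + φ z ≠ 0 := by linarith
    have : φ z + 1 ≠ 0 := by linarith
    field_simp
    ring
  refine ⟨hG', fun z hz => ?_⟩
  obtain ⟨⟨hφ1, hφ0⟩, -⟩ := hφ z hz
  rw [(hG' z hz).deriv]
  refine mul_eq_zero_iff_left (div_ne_zero ?_ ?_)
  · linarith
  · exact (mul_neg_of_neg_of_pos (by linarith) (by linarith)).ne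

theorem stmt_10 (φ : ℝ → ℝ)
    (hφ : ∀ z : ℝ, z < -1 → φ z ∈ Set.Ioo (-1 : ℝ) 0 ∧ φ z * Real.exp (φ z) = z * Real.exp z)
    (a : ℝ) (ha : 0 < a)
    (G : ℝ → ℝ) (hG : ∀ z : ℝ, z < -1 → G z = (z ^ 2 - φ z ^ 2) / 2 + (1 + a) * (z - φ z)) :
    (∀ z : ℝ, z < -1 →
      HasDerivAt G ((z - φ z) / (z * (φ z + 1)) * ((z + 1) * (φ z + 1) + a)) z) ∧
    (∀ z : ℝ, z < -1 → (deriv G z = 0 ↔ (z + 1) * (φ z + 1) + a = 0)) :=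
  stmt_10_general φ hφ a G hG
end
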